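/- arXiv:1708.02466 — 2 statements merged into one kernel-verified Lean document; each statement's English description precedes it below -/
import Mathlib

section
/- For every real number a with 0 < a ≤ (−3 + √13)/2, the (a,a)-Mahler measure of S(x,y) = y² + 2xy − x³ + x equals log a; that is, (1/(2π)²)·∫₀^{2π}∫₀^{2π} log|S(a·e^{iθ}, a·e^{iφ})| dθ dφ = log a. -/
/-- The `(a,b)`-Mahler measure of a two-variable polynomial function `P`,
given by `(1/(2π)²)·∫₀^{2π}∫₀^{2π} log|P(a·e^{iθ}, b·e^{iφ})| dθ dφ`. -/
noncomputable def mahlerMeasure (P : ℂ → ℂ → ℂ) (a b : ℝ) : ℝ :=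
  (1 / (2 * Real.pi) ^ 2) *
    ∫ θ in (0:ℝ)..(2 * Real.pi), ∫ φ in (0:ℝ)..(2 * Real.pi),
      Real.log (‖P ((a : ℂ) * Complex.exp (θ * Complex.I))
        ((b : ℂ) * Complex.exp (φ * Complex.I))‖)

/-- `S(x,y) = y² + 2xy − x³ + x`. -/
noncomputable def S : ℂ → ℂ → ℂ := fun x y => y ^ 2 + 2 * x * y - x ^ 3 + x

/-!
For `‖x‖ = a`, both roots `y` of `S(x, ·)` satisfy `x (1 - x²) = -y (y + 2x)`, so
`a (1 - a²) ≤ ‖y‖ (‖y‖ + 2a)`, and the bound `a² + 3a ≤ 1` forces `‖y‖ ≥ a`. Jensen's formula on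
the circle of radius `a` then turns the inner average into the log of the product of the roots,
`log ‖x - x³‖ = log a + log ‖1 - x²‖`, and a second application of it (the roots `±1` of `1 - x²`
lie outside the circle) kills the last term.
-/

open Real Metric

lemma mahlerMeasure_eq_circleAverage (P : ℂ → ℂ → ℂ) (a b : ℝ) :
    mahlerMeasure P a b =
      circleAverage (fun x ↦ circleAverage (fun y ↦ log ‖P x y‖) 0 b) 0 a := by
  simp only [mahlerMeasure, circleAverage, circleMap, zero_add, smul_eq_mul,
    intervalIntegral.integral_const_mul]
  ring

lemma circleAverage_log_norm_sub_const_of_le_norm {c u : ℂ} {R : ℝ} (hR : 0 < R)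
    (h : R ≤ ‖c - u‖) : circleAverage (log ‖· - u‖) c R = log ‖c - u‖ := by
  have hcu : 0 < ‖c - u‖ := hR.trans_le h
  rw [circleAverage_log_norm_sub_const_eq_log_radius_add_posLog hR.ne', posLog_eq_log,
    log_mul (inv_ne_zero hR.ne') hcu.ne', log_inv, add_neg_cancel_left]
  rw [abs_of_pos (by positivity)]
  exact (one_le_inv_mul₀ hR).2 h

lemma circleAverage_log_norm_sub_mul_sub {c α β : ℂ} {R : ℝ} (hR : 0 < R)
    (hα : R ≤ ‖c - α‖) (hβ : R ≤ ‖c - β‖) :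
    circleAverage (fun z ↦ log ‖(z - α) * (z - β)‖) c R = log ‖(c - α) * (c - β)‖ := by
  have hαc : c - α ≠ 0 := norm_pos_iff.1 (hR.trans_le hα)
  have hβc : c - β ≠ 0 := norm_pos_iff.1 (hR.trans_le hβ)
  calc circleAverage (fun z ↦ log ‖(z - α) * (z - β)‖) c R
      = circleAverage ((log ‖· - α‖) + (log ‖· - β‖)) c R := by
        refine circleAverage_congr_codiscreteWithin ?_ hR.ne'
        filter_upwards [compl_singleton_mem_codiscreteWithin α,
          compl_singleton_mem_codiscreteWithin β] with z hzα hzβ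
        rw [norm_mul, Pi.add_apply, log_mul (norm_ne_zero_iff.2 (sub_ne_zero.2 hzα))
          (norm_ne_zero_iff.2 (sub_ne_zero.2 hzβ))]
    _ = log ‖c - α‖ + log ‖c - β‖ := by
        rw [circleAverage_add (circleIntegrable_log_norm_sub_const R)
          (circleIntegrable_log_norm_sub_const R),
          circleAverage_log_norm_sub_const_of_le_norm hR hα,
          circleAverage_log_norm_sub_const_of_le_norm hR hβ]
    _ = log ‖(c - α) * (c - β)‖ := by
        rw [norm_mul, log_mul (norm_ne_zero_iff.2 hαc) (norm_ne_zero_iff.2 hβc)]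

lemma norm_le_norm_of_S_eq_zero {x y : ℂ} (hx : ‖x‖ ^ 2 + 3 * ‖x‖ ≤ 1) (h : S x y = 0) :
    ‖x‖ ≤ ‖y‖ := by
  by_contra! hy
  have hfac : x * (1 - x ^ 2) = -(y * (y + 2 * x)) := by
    simp only [S] at h
    linear_combination h
  have hnorm : ‖x‖ * ‖1 - x ^ 2‖ = ‖y‖ * ‖y + 2 * x‖ := by
    simpa only [norm_mul, norm_neg] using congrArg (‖·‖) hfac
  have h1 : 1 - ‖x‖ ^ 2 ≤ ‖1 - x ^ 2‖ := by
    have := norm_sub_norm_le (1 : ℂ) (x ^ 2)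
    rwa [norm_one, norm_pow] at this
  have h2 : ‖y + 2 * x‖ ≤ ‖y‖ + 2 * ‖x‖ := by
    simpa only [norm_mul, Complex.norm_ofNat] using norm_add_le y (2 * x)
  nlinarith [norm_nonneg y, norm_nonneg (y + 2 * x),
    mul_le_mul_of_nonneg_left h1 (norm_nonneg x), mul_le_mul_of_nonneg_left h2 (norm_nonneg y)]

lemma circleAverage_log_norm_S {x : ℂ} {R : ℝ} (hR : 0 < R) (hRx : R ≤ ‖x‖)
    (hx : ‖x‖ ^ 2 + 3 * ‖x‖ ≤ 1) :
    circleAverage (fun y ↦ log ‖S x y‖) 0 R = log ‖x - x ^ 3‖ := by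
  obtain ⟨s, hs⟩ := IsAlgClosed.exists_pow_nat_eq (x ^ 3 + x ^ 2 - x) two_pos
  have hfac : ∀ y, S x y = (y - (-x + s)) * (y - (-x - s)) := fun y ↦ by
    simp only [S]
    linear_combination hs
  have hroot : ∀ t, S x t = 0 → R ≤ ‖0 - t‖ := fun t ht ↦ by
    simpa only [zero_sub, norm_neg] using hRx.trans (norm_le_norm_of_S_eq_zero hx ht)
  simp_rw [hfac]
  rw [circleAverage_log_norm_sub_mul_sub hR (hroot _ (by simp [hfac])) (hroot _ (by simp [hfac]))]
  congr 2
  linear_combination -hs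

lemma circleAverage_log_norm_sub_cube {R : ℝ} (hR : 0 < R) (hR1 : R < 1) :
    circleAverage (fun x ↦ log ‖x - x ^ 3‖) 0 R = log R := by
  have hpt : Set.EqOn (fun x : ℂ ↦ log ‖x - x ^ 3‖)
      (fun x ↦ log R + log ‖(x - 1) * (x - (-1))‖) (sphere 0 |R|) := by
    intro x hx
    have hxR : ‖x‖ = R := by simpa [abs_of_pos hR] using hx
    have hx1 : (x - 1) * (x - (-1)) ≠ 0 := by
      refine mul_ne_zero (fun h ↦ ?_) (fun h ↦ ?_) <;>
        · rw [sub_eq_zero] at h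
          simp [h] at hxR
          linarith
    dsimp only
    rw [show x - x ^ 3 = -x * ((x - 1) * (x - (-1))) by ring, norm_mul, norm_neg, hxR,
      log_mul hR.ne' (norm_ne_zero_iff.2 hx1)]
  rw [circleAverage_congr_sphere hpt, circleAverage_fun_add (circleIntegrable_const _ _ _)
    (MeromorphicOn.circleIntegrable_log_norm fun z _ ↦ by fun_prop), circleAverage_const,
    circleAverage_log_norm_sub_mul_sub hR (by simpa using hR1.le) (by simpa using hR1.le)]
  simp

theorem stmt_1 (a : ℝ) (ha0 : 0 < a) (ha : a ≤ (-3 + Real.sqrt 13) / 2) :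
    mahlerMeasure S a a = Real.log a := by
  have hsqrt : Real.sqrt 13 ^ 2 = 13 := Real.sq_sqrt (by norm_num)
  have ha1 : a ^ 2 + 3 * a ≤ 1 := by nlinarith [Real.sqrt_nonneg 13]
  have hsphere : Set.EqOn (fun x ↦ circleAverage (fun y ↦ log ‖S x y‖) 0 a)
      (fun x ↦ log ‖x - x ^ 3‖) (sphere 0 |a|) := by
    intro x hx
    have hxa : ‖x‖ = a := by simpa [abs_of_pos ha0] using hx
    exact circleAverage_log_norm_S ha0 hxa.ge (by rwa [hxa])
  rw [mahlerMeasure_eq_circleAverage, circleAverage_congr_sphere hsphere,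
    circleAverage_log_norm_sub_cube ha0 (by nlinarith)]
end

section
/- For every real number a, the classical Mahler measure of P_a(x,y) = y² + 2xy − a·x³ + a⁻¹·x satisfies: m(P_a) = log a whenever a ≥ (3 + √13)/2, and m(P_a) = log(a⁻¹) whenever 0 < a ≤ (−3 + √13)/2. -/
/-- `P_a(x,y) = y² + 2xy − a·x³ + a⁻¹·x` for a real parameter `a`. -/
noncomputable def Pa (a : ℝ) : ℂ → ℂ → ℂ :=
  fun x y => y ^ 2 + 2 * x * y - (a : ℂ) * x ^ 3 + (a : ℂ)⁻¹ * x

open Real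
open scoped Polynomial

theorem one_le_norm_of_sq_add_mul_add_eq_zero {𝕜 : Type*} [NormedDivisionRing 𝕜] {b c z : 𝕜}
    (hb : ‖b‖ ≤ 2) (hc : 3 ≤ ‖c‖) (hz : z ^ 2 + b * z + c = 0) : 1 ≤ ‖z‖ := by
  by_contra! hz1
  have : ‖c‖ ≤ ‖z‖ ^ 2 + 2 * ‖z‖ := calc
    ‖c‖ = ‖z ^ 2 + b * z‖ := by rw [eq_neg_of_add_eq_zero_right hz, norm_neg]
    _ ≤ ‖z‖ ^ 2 + ‖b‖ * ‖z‖ := (norm_add_le _ _).trans_eq (by rw [norm_mul, norm_pow])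
    _ ≤ ‖z‖ ^ 2 + 2 * ‖z‖ := by gcongr
  nlinarith [norm_nonneg z]

namespace Polynomial

theorem logMahlerMeasure_eq_log_norm_leadingCoeff_of_norm_roots_le_one {p : ℂ[X]}
    (h : ∀ z ∈ p.roots, ‖z‖ ≤ 1) : p.logMahlerMeasure = log ‖p.leadingCoeff‖ := by
  rw [logMahlerMeasure_eq_log_leadingCoeff_add_sum_log_roots, Multiset.sum_eq_zero, add_zero]
  simp only [Multiset.mem_map]
  rintro _ ⟨z, hz, rfl⟩
  simpa [posLog_eq_zero_iff] using h z hz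

theorem logMahlerMeasure_eq_log_norm_coeff_zero_of_one_le_norm_roots {p : ℂ[X]}
    (h : ∀ z ∈ p.roots, 1 ≤ ‖z‖) : p.logMahlerMeasure = log ‖p.coeff 0‖ := by
  rcases eq_or_ne p 0 with rfl | hp
  · simp
  have hprod : ‖p.roots.prod‖ = (p.roots.map (‖·‖)).prod :=
    map_multiset_prod (normHom : ℂ →*₀ ℝ) _
  have hne : ∀ x ∈ p.roots.map (‖·‖), x ≠ 0 := by
    simp only [Multiset.mem_map]
    rintro _ ⟨z, hz, rfl⟩
    exact (one_pos.trans_le (h z hz)).ne'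
  rw [logMahlerMeasure_eq_log_leadingCoeff_add_sum_log_roots,
    (IsAlgClosed.splits p).coeff_zero_eq_leadingCoeff_mul_prod_roots]
  simp only [norm_mul, norm_pow, norm_neg, norm_one, one_pow, one_mul, hprod]
  rw [log_mul (by simpa using hp) (Multiset.prod_ne_zero fun h0 ↦ hne 0 h0 rfl),
    log_multiset_prod hne, Multiset.map_map]
  congr 2
  refine Multiset.map_congr rfl fun z hz ↦ ?_
  exact posLog_eq_log (by rw [abs_norm]; exact h z hz)

theorem logMahlerMeasure_X_sq_add_C_mul_X_add_C {b c : ℂ} (hb : ‖b‖ ≤ 2) (hc : 3 ≤ ‖c‖) :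
    (X ^ 2 + C b * X + C c).logMahlerMeasure = log ‖c‖ := by
  rw [logMahlerMeasure_eq_log_norm_coeff_zero_of_one_le_norm_roots]
  · simp
  intro z hz
  refine one_le_norm_of_sq_add_mul_add_eq_zero hb hc ?_
  simpa using (mem_roots'.1 hz).2

theorem logMahlerMeasure_C_inv_sub_C_mul_X_sq {a : ℝ} (ha : 0 < a) :
    (C (a : ℂ)⁻¹ - C (a : ℂ) * X ^ 2).logMahlerMeasure = log (max a a⁻¹) := by
  have hroots : ∀ z ∈ (C (a : ℂ)⁻¹ - C (a : ℂ) * X ^ 2).roots, ‖z‖ = a⁻¹ := by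
    intro z hz
    have hsq : (a : ℂ) * z ^ 2 = (a : ℂ)⁻¹ := by
      have hroot := (mem_roots'.1 hz).2
      simp only [IsRoot.def, eval_sub, eval_C, eval_mul, eval_pow, eval_X] at hroot
      linear_combination -hroot
    have hnorm := congrArg norm hsq
    simp only [norm_mul, norm_pow, norm_inv, Complex.norm_real, Real.norm_eq_abs,
      abs_of_pos ha] at hnorm
    refine (pow_left_inj₀ (norm_nonneg z) (inv_nonneg.2 ha.le) two_ne_zero).1 ?_
    field_simp at hnorm ⊢
    linear_combination hnorm
  rcases le_total 1 a with h1 | h1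
  · rw [max_eq_left ((inv_le_one_of_one_le₀ h1).trans h1),
      logMahlerMeasure_eq_log_norm_leadingCoeff_of_norm_roots_le_one]
    · have hquad : C (a : ℂ)⁻¹ - C (a : ℂ) * X ^ 2
          = C (-(a : ℂ)) * X ^ 2 + C 0 * X + C (a : ℂ)⁻¹ := by
        simp only [C_neg, C_0]; ring
      rw [hquad, leadingCoeff_quadratic (by exact_mod_cast (neg_ne_zero.2 ha.ne')), norm_neg,
        Complex.norm_real, Real.norm_of_nonneg ha.le]
    · intro z hz; rw [hroots z hz]; exact inv_le_one_of_one_le₀ h1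
  · rw [max_eq_right (h1.trans ((one_le_inv₀ ha).2 h1)),
      logMahlerMeasure_eq_log_norm_coeff_zero_of_one_le_norm_roots]
    · simp [abs_of_pos ha]
    · intro z hz; rw [hroots z hz]; exact (one_le_inv₀ ha).2 h1

end Polynomial

theorem mahlerMeasure_one_one_eq_circleAverage (P : ℂ → ℂ → ℂ) :
    mahlerMeasure P 1 1 =
      circleAverage (fun x ↦ circleAverage (fun y ↦ log ‖P x y‖) 0 1) 0 1 := by
  simp only [mahlerMeasure, circleAverage_def, circleMap, smul_eq_mul,
    intervalIntegral.integral_const_mul, Complex.ofReal_one, one_mul, zero_add]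
  ring

open Polynomial in
theorem circleAverage_log_norm_Pa {a : ℝ} (ha : 0 < a) (h : 3 ≤ |a - a⁻¹|) {x : ℂ}
    (hx : ‖x‖ = 1) : circleAverage (fun y ↦ log ‖Pa a x y‖) 0 1 = log ‖(a : ℂ)⁻¹ - a * x ^ 2‖ := by
  have hPa : ∀ y, Pa a x y = (X ^ 2 + C (2 * x) * X + C ((a : ℂ)⁻¹ * x - a * x ^ 3)).eval y := by
    intro y; simp only [Pa, eval_add, eval_pow, eval_X, eval_mul, eval_C]; ring
  have hc : ‖(a : ℂ)⁻¹ * x - a * x ^ 3‖ = ‖(a : ℂ)⁻¹ - a * x ^ 2‖ := by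
    rw [show (a : ℂ)⁻¹ * x - a * x ^ 3 = x * ((a : ℂ)⁻¹ - a * x ^ 2) by ring, norm_mul, hx, one_mul]
  have h3 : 3 ≤ ‖(a : ℂ)⁻¹ - a * x ^ 2‖ := calc
    3 ≤ |a - a⁻¹| := h
    _ = |‖(a : ℂ) * x ^ 2‖ - ‖(a : ℂ)⁻¹‖| := by simp [hx, abs_of_pos ha]
    _ ≤ ‖(a : ℂ) * x ^ 2 - (a : ℂ)⁻¹‖ := abs_norm_sub_norm_le _ _
    _ = ‖(a : ℂ)⁻¹ - a * x ^ 2‖ := norm_sub_rev _ _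
  simp_rw [hPa]
  rw [← logMahlerMeasure_def, logMahlerMeasure_X_sq_add_C_mul_X_add_C (by simp [hx]) (hc ▸ h3), hc]

theorem mahlerMeasure_Pa {a : ℝ} (ha : 0 < a) (h : 3 ≤ |a - a⁻¹|) :
    mahlerMeasure (Pa a) 1 1 = log (max a a⁻¹) := by
  rw [mahlerMeasure_one_one_eq_circleAverage,
    ← Polynomial.logMahlerMeasure_C_inv_sub_C_mul_X_sq ha, Polynomial.logMahlerMeasure_def]
  refine circleAverage_congr_sphere fun x hx ↦ ?_
  simpa using circleAverage_log_norm_Pa ha h (by simpa using hx)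

theorem stmt_6 (a : ℝ) :
    ((3 + Real.sqrt 13) / 2 ≤ a → mahlerMeasure (Pa a) 1 1 = Real.log a) ∧
    (0 < a → a ≤ (-3 + Real.sqrt 13) / 2 → mahlerMeasure (Pa a) 1 1 = Real.log a⁻¹) := by
  have h13 : √13 ^ 2 = 13 := sq_sqrt (by norm_num)
  have h3 : 3 < √13 := by nlinarith [sqrt_nonneg 13]
  refine ⟨fun h ↦ ?_, fun ha h ↦ ?_⟩
  · have ha : 0 < a := by linarith
    have hgap : 3 ≤ a - a⁻¹ := by
      have := mul_inv_cancel₀ ha.ne'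
      nlinarith [mul_nonneg (sub_nonneg.2 h) (by linarith : 0 ≤ a - (3 - √13) / 2)]
    rw [mahlerMeasure_Pa ha (hgap.trans (le_abs_self _)), max_eq_left (by linarith)]
  · have hgap : 3 ≤ a⁻¹ - a := by
      have := mul_inv_cancel₀ ha.ne'
      nlinarith [mul_nonneg (sub_nonneg.2 h) (by linarith : 0 ≤ a + (3 + √13) / 2)]
    rw [mahlerMeasure_Pa ha ((hgap.trans (le_abs_self _)).trans_eq (abs_sub_comm _ _)),
      max_eq_right (by linarith)]
end
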